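/- Suppose r = 2 and the matrices M_1, M_2 satisfy conditions (H1a) and (H1b). Let j ∈ {1,2}, let w ∈ W_m, and let a ∈ A satisfy M_j(a, t(w)) = 1. Then there exists a unique word v ∈ W_{m+e_j} such that v|[0,m] = w and t(v) = a. -/

import Mathlib

open Matrix

variable {r : ℕ} {A : Type*}

/-- The `j`-th standard basis vector of `ℤ^r`. -/
def evec (r : ℕ) (j : Fin r) : Fin r → ℤ := fun i => if i = j then 1 else 0

/-- `w` represents a word of shape `m` (only its values on `[0,m]` matter):
`m ≥ 0` and the transition matrices are respected on the box `[0,m]`. -/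
def IsWord (M : Fin r → Matrix A A ℤ) (m : Fin r → ℤ) (w : (Fin r → ℤ) → A) : Prop :=
  0 ≤ m ∧ ∀ (l : Fin r → ℤ) (j : Fin r), 0 ≤ l → l + evec r j ≤ m →
    M j (w (l + evec r j)) (w l) = 1

/-- Two representing functions agree on the box `[0,m]`; this is equality of
words of shape `m`. -/
def AgreeOn (m : Fin r → ℤ) (w w' : (Fin r → ℤ) → A) : Prop :=
  ∀ l : Fin r → ℤ, 0 ≤ l → l ≤ m → w l = w' l

/-- The restriction `w|[k,k+n]`, as a word based at `0`: `(restrictW k w) i = w (i + k)`. -/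
def restrictW (k : Fin r → ℤ) (w : (Fin r → ℤ) → A) : (Fin r → ℤ) → A :=
  fun i => w (i + k)

/-- `w` (a word of shape `m`) is `p`-periodic: the translate `τ_p w`, given by
`(τ_p w)(x) = w (x - p)`, agrees with `w` on `[0,m] ∩ [p,p+m]`. -/
def IsPeriodic (p m : Fin r → ℤ) (w : (Fin r → ℤ) → A) : Prop :=
  ∀ x : Fin r → ℤ, 0 ≤ x → x ≤ m → p ≤ x → x ≤ p + m → w (x - p) = w x

/-- Condition (H0): each `M j` is nonzero. -/
def H0 (M : Fin r → Matrix A A ℤ) : Prop := ∀ j, M j ≠ 0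

/-- Condition (H1): unique products of words. -/
def H1 (M : Fin r → Matrix A A ℤ) : Prop :=
  ∀ (m n : Fin r → ℤ) (u v : (Fin r → ℤ) → A),
    IsWord M m u → IsWord M n v → u m = v 0 →
      (∃ w, IsWord M (m + n) w ∧ AgreeOn m w u ∧ AgreeOn n (restrictW m w) v) ∧
      (∀ w w', IsWord M (m + n) w → AgreeOn m w u → AgreeOn n (restrictW m w) v →
        IsWord M (m + n) w' → AgreeOn m w' u → AgreeOn n (restrictW m w') v →
        AgreeOn (m + n) w w')

/-- Condition (H2): the directed graph on `A` with an edge `a → b` whenever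
`M i b a = 1` for some `i` is irreducible. -/
def H2 (M : Fin r → Matrix A A ℤ) : Prop :=
  ∀ a b : A, Relation.ReflTransGen (fun x y => ∃ i, M i y x = 1) a b

/-- Condition (H3): for each nonzero `p ∈ ℤ^r` there is a non-`p`-periodic word. -/
def H3 (M : Fin r → Matrix A A ℤ) : Prop :=
  ∀ p : Fin r → ℤ, p ≠ 0 → ∃ (m : Fin r → ℤ) (w : (Fin r → ℤ) → A),
    IsWord M m w ∧ ¬ IsPeriodic p m w

/-- Condition (H1a): the matrices commute. -/
def H1a [Fintype A] (M : Fin r → Matrix A A ℤ) : Prop :=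
  ∀ i j, M i * M j = M j * M i

/-- Condition (H1b): for `i < j`, the entries of `M i * M j` lie in `{0,1}`. -/
def H1b [Fintype A] (M : Fin r → Matrix A A ℤ) : Prop :=
  ∀ i j, i < j → ∀ a b : A, (M i * M j) b a = 0 ∨ (M i * M j) b a = 1

/-- Condition (H1c): for `i < j < k`, the entries of `M i * M j * M k` lie in `{0,1}`. -/
def H1c [Fintype A] (M : Fin r → Matrix A A ℤ) : Prop :=
  ∀ i j k, i < j → j < k → ∀ a b : A,
    (M i * M j * M k) b a = 0 ∨ (M i * M j * M k) b a = 1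

/-- Condition (H3*). -/
def H3star (M : Fin r → Matrix A A ℤ) : Prop :=
  ∀ (j : Fin r) (m : Fin r → ℤ), m j = 0 → ∀ w : (Fin r → ℤ) → A, IsWord M m w →
    ∃ u u', IsWord M (m + evec r j) u ∧ IsWord M (m + evec r j) u' ∧
      AgreeOn m u w ∧ AgreeOn m u' w ∧ u (evec r j) ≠ u' (evec r j)

/-- `x` represents the product word `uv` of `u ∈ W_m` and `v ∈ W_n`. -/
def IsProd (M : Fin r → Matrix A A ℤ) (m n : Fin r → ℤ)
    (u v x : (Fin r → ℤ) → A) : Prop :=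
  IsWord M (m + n) x ∧ AgreeOn m x u ∧ AgreeOn n (restrictW m x) v

/-! The new column `x_j = m_j + 1` is filled in from the top down. For `k ≠ j`, the entry
`(M_j M_k)(c, p) = (M_k M_j)(c, p)` lies in `{0, 1}` and counts both the paths `p →ₖ q →ⱼ c` and the
paths `p →ⱼ d →ₖ c`; so a unit square with three known corners `p, q, c` has exactly one fourth
corner `d`. Starting from `a` at the top, each letter of the new column is thus forced by the one
above it and the letter of `w` to its left, which gives existence and uniqueness at once. -/

open Finset Function

section ZeroOneMatrix

variable [Fintype A]

lemma mul_apply_eq_card_of_zero_or_one {N N' : Matrix A A ℤ}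
    (hN : ∀ a b, N b a = 0 ∨ N b a = 1) (hN' : ∀ a b, N' b a = 0 ∨ N' b a = 1) (a b : A) :
    (N * N') b a = #{d | N b d = 1 ∧ N' d a = 1} := by
  rw [Matrix.mul_apply, natCast_card_filter]
  refine sum_congr rfl fun d _ => ?_
  rcases hN d b with h | h <;> rcases hN' a d with h' | h' <;> simp [h, h']

lemma mul_apply_zero_or_one_of_ne {M : Fin r → Matrix A A ℤ} (h1a : H1a M) (h1b : H1b M)
    {j k : Fin r} (hjk : j ≠ k) (a b : A) : (M j * M k) b a = 0 ∨ (M j * M k) b a = 1 := by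
  rcases hjk.lt_or_gt with h | h
  · exact h1b j k h a b
  · rw [h1a]
    exact h1b k j h a b

theorem existsUnique_square_completion {M : Fin r → Matrix A A ℤ}
    (hM : ∀ j (a b : A), M j b a = 0 ∨ M j b a = 1) (h1a : H1a M) (h1b : H1b M)
    {j k : Fin r} (hjk : j ≠ k) :
    ∀ p q c, M k q p = 1 → M j c q = 1 → ∃! d, M j d p = 1 ∧ M k c d = 1 := by
  intro p q c hqp hcq
  have hcard : #{d | M k c d = 1 ∧ M j d p = 1} = #{d | M j c d = 1 ∧ M k d p = 1} := by
    have := mul_apply_eq_card_of_zero_or_one (hM k) (hM j) p c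
    rw [h1a, mul_apply_eq_card_of_zero_or_one (hM j) (hM k)] at this
    exact_mod_cast this.symm
  have hle : #{d | M j c d = 1 ∧ M k d p = 1} ≤ 1 := by
    have := mul_apply_eq_card_of_zero_or_one (hM j) (hM k) p c
    rcases mul_apply_zero_or_one_of_ne h1a h1b hjk p c with h | h <;> omega
  have hpos : 0 < #{d | M j c d = 1 ∧ M k d p = 1} :=
    card_pos.2 ⟨q, by simp [hcq, hqp]⟩
  obtain ⟨d, hd⟩ := card_eq_one.1 (hcard.trans (by omega))
  refine ⟨d, ?_, fun d' hd' => ?_⟩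
  · simpa [and_comm] using (Finset.ext_iff.1 hd d).2 (mem_singleton_self d)
  · simpa using (Finset.ext_iff.1 hd d').1 (by simp [hd'.1, hd'.2])

end ZeroOneMatrix

section Ladder

variable (J K : A → A → Prop)

-- As with `M k b a = 1`, `K b a` is an edge from `a` to `b`.
def IsChainOn (s T : ℤ) (q : ℤ → A) : Prop :=
  ∀ t, s ≤ t → t < T → K (q (t + 1)) (q t)

def IsLadderLift (s T : ℤ) (q c : ℤ → A) : Prop :=
  (∀ t, s ≤ t → t ≤ T → J (c t) (q t)) ∧ IsChainOn K s T c

variable {J K}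

theorem exists_isLadderLift (hsq : ∀ p q c, K q p → J c q → ∃! d, J d p ∧ K c d)
    {s T : ℤ} (hsT : s ≤ T) {q : ℤ → A} (hq : IsChainOn K s T q) {c₀ : A} (h₀ : J c₀ (q T)) :
    ∃ c, c T = c₀ ∧ IsLadderLift J K s T q c := by
  induction s, hsT using Int.leInductionDown with
  | base => exact ⟨fun _ => c₀, rfl, fun t h h' => by rwa [le_antisymm h' h], fun t h h' => by omega⟩
  | pred s hsT ih =>
    obtain ⟨c, hcT, hcJ, hcK⟩ := ih fun t h h' => hq t (by omega) h'
    obtain ⟨d, hdJ, hdK⟩ := (hsq _ _ _ (hq (s - 1) le_rfl (by omega)) (by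
      simpa using hcJ s le_rfl hsT)).exists
    refine ⟨update c (s - 1) d, by simp [update_of_ne (by omega : T ≠ s - 1), hcT], ?_, ?_⟩
    · intro t h h'
      rcases eq_or_ne t (s - 1) with rfl | ht
      · simpa using hdJ
      · simpa [update_of_ne ht] using hcJ t (by omega) h'
    · intro t h h'
      rcases eq_or_ne t (s - 1) with rfl | ht
      · simpa [update_of_ne (by omega : s ≠ s - 1)] using hdK
      · simpa [update_of_ne ht, update_of_ne (by omega : t + 1 ≠ s - 1)] using hcK t (by omega) h'

theorem IsLadderLift.eq (hsq : ∀ p q c, K q p → J c q → ∃! d, J d p ∧ K c d)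
    {s T : ℤ} {q c c' : ℤ → A} (hq : IsChainOn K s T q) (hc : IsLadderLift J K s T q c)
    (hc' : IsLadderLift J K s T q c') (hT : c T = c' T) {t : ℤ} (hst : s ≤ t) (htT : t ≤ T) :
    c t = c' t := by
  induction t, htT using Int.leInductionDown with
  | base => exact hT
  | pred t htT ih =>
    have hsq' := hsq _ _ (c t) (hq (t - 1) hst (by omega)) (by simpa using hc.1 t (by omega) htT)
    refine hsq'.unique ⟨hc.1 _ hst (by omega), by simpa using hc.2 _ hst (by omega)⟩
      ⟨hc'.1 _ hst (by omega), ?_⟩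
    simpa [ih (by omega)] using hc'.2 _ hst (by omega)

end Ladder

lemma evec_nonneg (j : Fin r) : 0 ≤ evec r j := fun i => by
  simp only [evec, Pi.zero_apply]
  split <;> omega

lemma update_add_evec_self (x : Fin r → ℤ) (k : Fin r) (t : ℤ) :
    update x k t + evec r k = update x k (t + 1) := by
  ext i
  rcases eq_or_ne i k with rfl | hik <;> simp [evec, *]

lemma update_add_evec_of_ne {j k : Fin r} (hjk : j ≠ k) (x : Fin r → ℤ) (t : ℤ) :
    update x k t + evec r j = update (x + evec r j) k t := by
  ext i
  rcases eq_or_ne i k with rfl | hik <;> simp [evec, *, hjk.symm]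

lemma update_nonneg {x : Fin r → ℤ} (hx : 0 ≤ x) (k : Fin r) {t : ℤ} (ht : 0 ≤ t) :
    0 ≤ update x k t :=
  le_update_iff.2 ⟨ht, fun i _ => hx i⟩

lemma isChainOn_of_isWord {M : Fin r → Matrix A A ℤ} {x : Fin r → ℤ} {u : (Fin r → ℤ) → A}
    (hu : IsWord M x u) (k : Fin r) :
    IsChainOn (M k · · = 1) 0 (x k) (fun t => u (update x k t)) := by
  intro t h0 hT
  have := hu.2 (update x k t) k (update_nonneg hu.1 k h0)
    (by rw [update_add_evec_self]; exact update_le_iff.2 ⟨by omega, fun _ _ => le_rfl⟩)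
  rwa [update_add_evec_self] at this

lemma isLadderLift_of_isWord {M : Fin r → Matrix A A ℤ} {j k : Fin r} (hjk : j ≠ k)
    {m : Fin r → ℤ} {v w : (Fin r → ℤ) → A} (hv : IsWord M (m + evec r j) v)
    (hvw : AgreeOn m v w) (hm : 0 ≤ m) :
    IsLadderLift (M j · · = 1) (M k · · = 1) 0 (m k)
      (fun t => w (update m k t)) (fun t => v (update (m + evec r j) k t)) := by
  refine ⟨fun t h0 hT => ?_, by simpa [evec, hjk.symm] using isChainOn_of_isWord hv k⟩
  have hl : update m k t ≤ m := update_le_iff.2 ⟨hT, fun _ _ => le_rfl⟩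
  have := hv.2 (update m k t) j (update_nonneg hm k h0) (by
    rw [update_add_evec_of_ne hjk]
    exact update_le_iff.2 ⟨by simpa [evec, hjk.symm] using hT, fun _ _ => le_rfl⟩)
  rwa [update_add_evec_of_ne hjk, hvw _ (update_nonneg hm k h0) hl] at this

section Plane

variable {j k : Fin 2}

lemma Fin.eq_or_eq_of_ne_two (hjk : j ≠ k) (i : Fin 2) : i = j ∨ i = k := by
  omega

lemma le_or_eq_update_of_le_add_evec (hjk : j ≠ k) {l m : Fin 2 → ℤ} (h : l ≤ m + evec 2 j) :
    l ≤ m ∨ l = update (m + evec 2 j) k (l k) := by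
  by_cases hl : l j = m j + 1
  · right
    ext i
    rcases Fin.eq_or_eq_of_ne_two hjk i with rfl | rfl <;> simp [evec, hjk, hl]
  · left
    rw [Pi.le_def]
    intro i
    have := h i
    rcases Fin.eq_or_eq_of_ne_two hjk i with rfl | rfl
    · simp [evec] at this
      omega
    · simpa [evec, hjk.symm] using this

lemma isWord_extend {M : Fin 2 → Matrix A A ℤ} (hjk : j ≠ k) {m : Fin 2 → ℤ}
    {w : (Fin 2 → ℤ) → A} (hw : IsWord M m w) {c : ℤ → A}
    (hc : IsLadderLift (M j · · = 1) (M k · · = 1) 0 (m k) (fun t => w (update m k t)) c) :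
    IsWord M (m + evec 2 j) (fun x => if x j ≤ m j then w x else c (x k)) := by
  refine ⟨add_nonneg hw.1 (evec_nonneg j), fun l i hl0 hle => ?_⟩
  rcases le_or_eq_update_of_le_add_evec hjk hle with hle' | hle'
  · have hlm : l ≤ m := (le_add_of_nonneg_right (evec_nonneg i)).trans hle'
    simp only [if_pos (hle' j), if_pos (hlm j)]
    exact hw.2 l i hl0 hle'
  rcases Fin.eq_or_eq_of_ne_two hjk i with rfl | rfl
  · rw [← update_add_evec_of_ne hjk, add_left_inj] at hle'
    obtain ⟨t, rfl⟩ : ∃ t, l = update m k t := ⟨_, hle'⟩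
    have h0t : 0 ≤ t := by simpa using hl0 k
    have htm : t ≤ m k := by simpa [evec, hjk.symm] using hle k
    simpa [update_add_evec_of_ne hjk, evec, hjk, hjk.symm] using hc.1 t h0t htm
  · have : (l + evec 2 i) i = l i + 1 := by simp [evec]
    rw [this, ← update_add_evec_self, add_left_inj] at hle'
    obtain ⟨t, rfl⟩ : ∃ t, l = update (m + evec 2 j) i t := ⟨_, hle'⟩
    have h0t : 0 ≤ t := by simpa using hl0 i
    have htm : t < m i := by simpa [evec, hjk.symm, Int.add_one_le_iff] using hle i
    simpa [update_add_evec_self, evec, hjk] using hc.2 t h0t htm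

lemma agreeOn_of_isWord_add_evec {M : Fin 2 → Matrix A A ℤ}
    (hsq : ∀ p q c, M k q p = 1 → M j c q = 1 → ∃! d, M j d p = 1 ∧ M k c d = 1)
    (hjk : j ≠ k) {m : Fin 2 → ℤ} {w v v' : (Fin 2 → ℤ) → A} (hw : IsWord M m w)
    (hv : IsWord M (m + evec 2 j) v) (hv' : IsWord M (m + evec 2 j) v')
    (hvw : AgreeOn m v w) (hv'w : AgreeOn m v' w) (htop : v (m + evec 2 j) = v' (m + evec 2 j)) :
    AgreeOn (m + evec 2 j) v v' := by
  have hk : (m + evec 2 j) k = m k := by simp [evec, hjk.symm]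
  intro l hl0 hl
  rcases le_or_eq_update_of_le_add_evec hjk hl with hlm | hlc
  · rw [hvw l hl0 hlm, hv'w l hl0 hlm]
  · rw [hlc]
    refine IsLadderLift.eq hsq (isChainOn_of_isWord hw k) (isLadderLift_of_isWord hjk hv hvw hw.1)
      (isLadderLift_of_isWord hjk hv' hv'w hw.1) ?_ (hl0 k) (hk ▸ hl k)
    simpa only [← hk, update_eq_self] using htop

end Plane

theorem stmt_2_general [Fintype A]
    (M : Fin 2 → Matrix A A ℤ)
    (hM : ∀ j (a b : A), M j b a = 0 ∨ M j b a = 1)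
    (h1a : H1a M) (h1b : H1b M)
    (j : Fin 2) (m : Fin 2 → ℤ) (w : (Fin 2 → ℤ) → A) (hw : IsWord M m w)
    (a : A) (ha : M j a (w m) = 1) :
    ∃ v : (Fin 2 → ℤ) → A,
      (IsWord M (m + evec 2 j) v ∧ AgreeOn m v w ∧ v (m + evec 2 j) = a) ∧
      ∀ v' : (Fin 2 → ℤ) → A, IsWord M (m + evec 2 j) v' → AgreeOn m v' w →
        v' (m + evec 2 j) = a → AgreeOn (m + evec 2 j) v v' := by
  obtain ⟨k, hjk⟩ : ∃ k, j ≠ k := ⟨j + 1, by fin_cases j <;> decide⟩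
  have hsq := existsUnique_square_completion hM h1a h1b hjk
  obtain ⟨c, hcT, hc⟩ := exists_isLadderLift hsq (hw.1 k) (isChainOn_of_isWord hw k)
    (c₀ := a) (by simpa using ha)
  let v x := if x j ≤ m j then w x else c (x k)
  have hvw : AgreeOn m v w := fun l _ hl => if_pos (hl j)
  have htop : v (m + evec 2 j) = a := by simp [v, evec, hcT, hjk.symm]
  exact ⟨v, ⟨isWord_extend hjk hw hc, hvw, htop⟩, fun v' hv' hv'w htop' =>
    agreeOn_of_isWord_add_evec hsq hjk hw (isWord_extend hjk hw hc) hv' hvw hv'w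
      (htop.trans htop'.symm)⟩

/-- for `r = 2`, under (H1a) and (H1b) alone, a word `w ∈ W_m`
together with a letter `a` with `M j a (t w) = 1` extends uniquely to a word
`v ∈ W_{m+e_j}` with `v|[0,m] = w` and `t v = a`. -/
theorem stmt_2 [Fintype A] [Nonempty A]
    (M : Fin 2 → Matrix A A ℤ)
    (hM : ∀ j (a b : A), M j b a = 0 ∨ M j b a = 1)
    (h1a : H1a M) (h1b : H1b M)
    (j : Fin 2) (m : Fin 2 → ℤ) (w : (Fin 2 → ℤ) → A) (hw : IsWord M m w)
    (a : A) (ha : M j a (w m) = 1) :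
    ∃ v : (Fin 2 → ℤ) → A,
      (IsWord M (m + evec 2 j) v ∧ AgreeOn m v w ∧ v (m + evec 2 j) = a) ∧
      ∀ v' : (Fin 2 → ℤ) → A, IsWord M (m + evec 2 j) v' → AgreeOn m v' w →
        v' (m + evec 2 j) = a → AgreeOn (m + evec 2 j) v v' :=
  stmt_2_general M hM h1a h1b j m w hw a ha
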